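/- arXiv:2506.08103 — 13 statements merged into one kernel-verified Lean document; each statement's English description precedes it below -/
import Mathlib

section
/- Let d ≥ 1 and let L : ℝ → Matrix (Fin d) (Fin d) ℝ be continuous and satisfy the Kolmogorov conditions: for every t, L(t)ᵢⱼ ≥ 0 whenever i ≠ j, and ∑ᵢ L(t)ᵢⱼ = 0 for every column j. Let u ∈ ℝ and let S : ℝ → Matrix (Fin d) (Fin d) ℝ satisfy S(u) = 1 and have derivative S'(t) = L(t) * S(t) for all t. Then for every t ≥ u the matrix S(t) is column-stochastic: all its entries are nonnegative and each of its columns sums to 1. -/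
open Filter Set Finset Topology

/-- Kolmogorov conditions on the left generator `L` of a classical master equation
imply that the solution `S` of `S' = L * S`, `S u = 1`, is column-stochastic for all `t ≥ u`. -/
theorem stmt_0 (d : ℕ) (hd : 1 ≤ d)
    (L : ℝ → Matrix (Fin d) (Fin d) ℝ) (hLcont : Continuous L)
    (hKpos : ∀ t, ∀ i j : Fin d, i ≠ j → 0 ≤ L t i j)
    (hKsum : ∀ t, ∀ j : Fin d, ∑ i, L t i j = 0)
    (u : ℝ) (S : ℝ → Matrix (Fin d) (Fin d) ℝ)
    (hSu : S u = 1)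
    (hS : ∀ t, ∀ i j : Fin d, HasDerivAt (fun s => S s i j) ((L t * S t) i j) t) :
    ∀ t, u ≤ t → (∀ i j, 0 ≤ S t i j) ∧ (∀ j, ∑ i, S t i j = 1) := by
  -- diagonal entries of L are nonpositive
  have hdiag : ∀ s : ℝ, ∀ i : Fin d, L s i i ≤ 0 := by
    intro s i
    have h := hKsum s i
    have : L s i i = -∑ j ∈ Finset.univ.erase i, L s j i := by
      have := Finset.sum_erase_add Finset.univ (fun j => L s j i) (Finset.mem_univ i)
      linarith [this.trans h]
    rw [this, neg_nonpos]
    exact Finset.sum_nonneg fun j hj => hKpos s j i (Finset.ne_of_mem_erase hj)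
  -- continuity of entries of S
  have hScont : ∀ i j : Fin d, Continuous (fun s => S s i j) := by
    intro i j
    rw [continuous_iff_continuousAt]
    exact fun x => (hS x i j).continuousAt
  -- column sums are constant equal to 1
  have hsum : ∀ t : ℝ, ∀ j : Fin d, ∑ i, S t i j = 1 := by
    intro t j
    have hderiv : ∀ x : ℝ, HasDerivAt (fun s => ∑ i, S s i j) 0 x := by
      intro x
      have h := HasDerivAt.fun_sum (fun i (_ : i ∈ Finset.univ) => hS x i j)
      have hz : ∑ i, (L x * S x) i j = 0 := by
        simp only [Matrix.mul_apply]
        rw [Finset.sum_comm]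
        have : ∀ k : Fin d, ∑ i, L x i k * S x k j = 0 := by
          intro k
          rw [← Finset.sum_mul, hKsum x k, zero_mul]
        simp [this]
      rwa [hz] at h
    have hconst : (fun s => ∑ i, S s i j) t = (fun s => ∑ i, S s i j) u :=
      is_const_of_deriv_eq_zero (fun x => (hderiv x).differentiableAt)
        (fun x => (hderiv x).deriv) t u
    simp only at hconst
    rw [hconst, hSu]
    simp [Matrix.one_apply]
  intro t ht
  refine ⟨?_, fun j => hsum t j⟩
  -- nonnegativity via Grönwall on the sum of negative parts
  set np : ℝ → ℝ := fun x => max (-x) 0 with hnp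
  have hnp_nonneg : ∀ x, 0 ≤ np x := fun x => le_max_right _ _
  have hnp_ge : ∀ x : ℝ, -x ≤ np x := fun x => le_max_left _ _
  have hnp_zero : ∀ x : ℝ, 0 ≤ x → np x = 0 := fun x hx => max_eq_right (by linarith)
  set n : ℝ → ℝ := fun s => ∑ i : Fin d, ∑ j : Fin d, np (S s i j) with hn
  have hn_nonneg : ∀ s, 0 ≤ n s := fun s =>
    Finset.sum_nonneg fun i _ => Finset.sum_nonneg fun j _ => hnp_nonneg _
  have hn_single : ∀ s, ∀ i j : Fin d, np (S s i j) ≤ n s := by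
    intro s i j
    calc np (S s i j) ≤ ∑ j' : Fin d, np (S s i j') :=
          Finset.single_le_sum (fun j' _ => hnp_nonneg _) (Finset.mem_univ j)
      _ ≤ n s := Finset.single_le_sum
          (fun i' (_ : i' ∈ Finset.univ) => Finset.sum_nonneg fun j' _ => hnp_nonneg (S s i' j'))
          (Finset.mem_univ i)
  -- bound on entries of L on [u, t]
  obtain ⟨C, hC0, hC⟩ : ∃ C : ℝ, 0 ≤ C ∧ ∀ s ∈ Icc u t, ∀ i k : Fin d, |L s i k| ≤ C := by
    have hFc : Continuous (fun s => ∑ i : Fin d, ∑ k : Fin d, |L s i k|) := by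
      apply continuous_finset_sum
      intro i _
      apply continuous_finset_sum
      intro k _
      have : Continuous (fun s => L s i k) :=
        (continuous_apply k).comp ((continuous_apply i).comp hLcont)
      exact this.abs
    obtain ⟨x0, hx0, hmax⟩ := isCompact_Icc.exists_isMaxOn (Set.nonempty_Icc.2 ht)
      hFc.continuousOn
    refine ⟨∑ i : Fin d, ∑ k : Fin d, |L x0 i k|,
      Finset.sum_nonneg fun i _ => Finset.sum_nonneg fun k _ => abs_nonneg _, ?_⟩
    intro s hs i k
    calc |L s i k| ≤ ∑ k' : Fin d, |L s i k'| :=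
          Finset.single_le_sum (f := fun k' => |L s i k'|)
            (fun k' _ => abs_nonneg _) (Finset.mem_univ k)
      _ ≤ ∑ i' : Fin d, ∑ k' : Fin d, |L s i' k'| := Finset.single_le_sum
          (f := fun i' => ∑ k' : Fin d, |L s i' k'|)
          (fun i' _ => Finset.sum_nonneg fun k' _ => abs_nonneg _)
          (Finset.mem_univ i)
      _ ≤ _ := hmax hs
  set K : ℝ := (d : ℝ) * ((d : ℝ) * C) with hK
  set f' : ℝ → ℝ := fun s => ∑ i : Fin d, ∑ j : Fin d,
    (if S s i j ≤ 0 then max (-((L s * S s) i j)) 0 else 0) with hf'def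
  -- continuity of n
  have hncont : Continuous n := by
    apply continuous_finset_sum
    intro i _
    apply continuous_finset_sum
    intro j _
    exact ((hScont i j).neg.max continuous_const)
  -- key slope-limit fact
  have hkey : ∀ x : ℝ, ∃ ℓ : ℝ, ℓ ≤ f' x ∧
      Tendsto (fun z => (z - x)⁻¹ * (n z - n x)) (𝓝[>] x) (𝓝 ℓ) := by
    intro x
    -- per-entry limits
    have hterm : ∀ i j : Fin d, ∃ g : ℝ,
        g ≤ (if S x i j ≤ 0 then max (-((L x * S x) i j)) 0 else 0) ∧
        Tendsto (fun z => (z - x)⁻¹ * (np (S z i j) - np (S x i j))) (𝓝[>] x) (𝓝 g) := by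
      intro i j
      have hslope : Tendsto (fun z => (z - x)⁻¹ * (S z i j - S x i j)) (𝓝[>] x)
          (𝓝 ((L x * S x) i j)) := by
        have h1 := hasDerivAt_iff_tendsto_slope.1 (hS x i j)
        have h2 : 𝓝[>] x ≤ 𝓝[≠] x :=
          nhdsWithin_mono x fun z hz => ne_of_gt hz
        have := h1.mono_left h2
        refine this.congr fun z => ?_
        simp [slope_def_field, div_eq_inv_mul]
      rcases lt_trichotomy (S x i j) 0 with hlt | heq | hgt
      · refine ⟨-((L x * S x) i j), ?_, ?_⟩
        · rw [if_pos hlt.le]; exact le_max_left _ _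
        · have hev : ∀ᶠ z in 𝓝[>] x, S z i j < 0 :=
            eventually_nhdsWithin_of_eventually_nhds
              ((hScont i j).continuousAt.eventually_lt continuous_const.continuousAt hlt)
          have := hslope.neg
          refine Tendsto.congr' ?_ this
          filter_upwards [hev] with z hz
          have e1 : np (S z i j) = -(S z i j) := max_eq_left (by linarith)
          have e2 : np (S x i j) = -(S x i j) := max_eq_left (by linarith)
          rw [e1, e2]; ring
      · refine ⟨max (-((L x * S x) i j)) 0, ?_, ?_⟩
        · rw [if_pos heq.le]
        · have hcont : Tendsto (fun z => max (-((z - x)⁻¹ * (S z i j - S x i j))) 0)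
              (𝓝[>] x) (𝓝 (max (-((L x * S x) i j)) 0)) :=
            hslope.neg.max tendsto_const_nhds
          refine Tendsto.congr' ?_ hcont
          filter_upwards [self_mem_nhdsWithin] with z (hz : x < z)
          have hpos : (0 : ℝ) ≤ (z - x)⁻¹ := inv_nonneg.2 (by linarith)
          have e2 : np (S x i j) = 0 := by rw [hnp, heq]; simp
          rw [e2, sub_zero, hnp]
          rw [mul_max_of_nonneg _ _ hpos, mul_zero, heq, sub_zero, mul_neg]
      · refine ⟨0, ?_, ?_⟩
        · split
          · exact le_max_right _ _
          · exact le_rfl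
        · have hev : ∀ᶠ z in 𝓝[>] x, 0 < S z i j :=
            eventually_nhdsWithin_of_eventually_nhds
              (continuous_const.continuousAt.eventually_lt (hScont i j).continuousAt hgt)
          refine Tendsto.congr' ?_ tendsto_const_nhds
          filter_upwards [hev] with z hz
          rw [hnp_zero _ hz.le, hnp_zero _ hgt.le]; simp
    choose g hg hgt using hterm
    refine ⟨∑ i : Fin d, ∑ j : Fin d, g i j, ?_, ?_⟩
    · exact Finset.sum_le_sum fun i _ => Finset.sum_le_sum fun j _ => hg i j
    · have := tendsto_finset_sum (Finset.univ : Finset (Fin d))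
        (fun i (_ : i ∈ Finset.univ) => tendsto_finset_sum (Finset.univ : Finset (Fin d))
          (fun j (_ : j ∈ Finset.univ) => hgt i j))
      refine Tendsto.congr (fun z => ?_) this
      rw [hn]
      rw [← Finset.sum_sub_distrib]
      rw [Finset.mul_sum]
      congr 1; ext i
      rw [← Finset.sum_sub_distrib, Finset.mul_sum]
  -- choose ℓ as derivative bound function
  choose ℓ hℓle hℓtend using hkey
  -- bound ℓ (indirectly: bound f') by K * n
  have hbound : ∀ x ∈ Ico u t, ℓ x ≤ K * n x + 0 := by
    intro x hx
    rw [add_zero]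
    refine le_trans (hℓle x) ?_
    have hxI : x ∈ Icc u t := ⟨hx.1, hx.2.le⟩
    have hineq : ∀ i j : Fin d,
        (if S x i j ≤ 0 then max (-((L x * S x) i j)) 0 else 0) ≤ C * n x := by
      intro i j
      have hCn : 0 ≤ C * n x := mul_nonneg hC0 (hn_nonneg x)
      split
      next hle =>
        refine max_le ?_ hCn
        have : -((L x * S x) i j) = ∑ k : Fin d, -(L x i k * S x k j) := by
          simp [Matrix.mul_apply]
        rw [this]
        have hterm : ∀ k : Fin d, -(L x i k * S x k j) ≤ C * np (S x k j) := by
          intro k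
          by_cases hki : k = i
          · subst hki
            have h1 : L x k k ≤ 0 := hdiag x k
            have h2 : 0 ≤ L x k k * S x k j := by nlinarith
            have h3 : 0 ≤ C * np (S x k j) := mul_nonneg hC0 (hnp_nonneg _)
            linarith
          · have h1 : 0 ≤ L x i k := hKpos x i k (fun h => hki h.symm)
            calc -(L x i k * S x k j) = L x i k * (-(S x k j)) := by ring
              _ ≤ L x i k * np (S x k j) :=
                  mul_le_mul_of_nonneg_left (hnp_ge _) h1
              _ ≤ C * np (S x k j) := mul_le_mul_of_nonneg_right
                  (le_trans (le_abs_self _) (hC x hxI i k)) (hnp_nonneg _)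
        calc ∑ k : Fin d, -(L x i k * S x k j) ≤ ∑ k : Fin d, C * np (S x k j) :=
              Finset.sum_le_sum fun k _ => hterm k
          _ = C * ∑ k : Fin d, np (S x k j) := by rw [Finset.mul_sum]
          _ ≤ C * n x := by
              refine mul_le_mul_of_nonneg_left ?_ hC0
              calc ∑ k : Fin d, np (S x k j)
                  ≤ ∑ k : Fin d, ∑ j' : Fin d, np (S x k j') := Finset.sum_le_sum
                    fun k _ => Finset.single_le_sum (fun j' _ => hnp_nonneg _)
                      (Finset.mem_univ j)
                _ = n x := rfl
      next => exact hCn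
    calc f' x ≤ ∑ i : Fin d, ∑ j : Fin d, C * n x :=
          Finset.sum_le_sum fun i _ => Finset.sum_le_sum fun j _ => hineq i j
      _ = K * n x := by
          simp [Finset.sum_const, hK]; ring
  -- the liminf slope hypothesis
  have hfrq : ∀ x ∈ Ico u t, ∀ r : ℝ, ℓ x < r →
      ∃ᶠ z in 𝓝[>] x, (z - x)⁻¹ * (n z - n x) < r := by
    intro x _ r hr
    have := (hℓtend x).eventually (eventually_lt_nhds hr)
    exact this.frequently
  have hgron := le_gronwallBound_of_liminf_deriv_right_le
    (f := n) (f' := ℓ) (δ := 0) (K := K) (ε := 0) (a := u) (b := t)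
    hncont.continuousOn hfrq
    (le_of_eq (Finset.sum_eq_zero fun i _ => Finset.sum_eq_zero fun j _ => by
      rw [hSu]
      exact hnp_zero _ (by by_cases h : i = j <;> simp [Matrix.one_apply, h])))
    hbound
  have hnt : n t ≤ 0 := by
    have := hgron t ⟨ht, le_refl t⟩
    rwa [gronwallBound_ε0_δ0] at this
  intro i j
  have h1 : np (S t i j) ≤ 0 := le_trans (hn_single t i j) hnt
  have h2 : -(S t i j) ≤ 0 := le_trans (hnp_ge _) h1
  linarith
end

section
/- Let a, b : ℝ → ℝ be continuously differentiable with 0 ≤ a(t) ≤ 1, 0 ≤ b(t) ≤ 1 and a(t) + b(t) ≠ 1 for all t, and set S(t) = !![a(t), 1 − b(t); 1 − a(t), b(t)]. Define, at each time t, w(t) = a'(t)·b(t) − a(t)·b'(t), ℓ₁(t) = (−w(t) − b'(t))/(a(t) + b(t) − 1) and ℓ₂(t) = (w(t) − a'(t))/(a(t) + b(t) − 1). Let u ≤ v. If ℓ₁(t) ≥ 0 and ℓ₂(t) ≥ 0 for all t ∈ [u, v], then the left propagator S(v) * (S(u))⁻¹ is column-stochastic: all its entries are nonnegative and each of its columns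 sums to 1. -/
set_option maxHeartbeats 1000000 in
/-- If the left rates `ℓ₁, ℓ₂` of a classical 2-state dynamics are nonnegative on `[u, v]`,
then the left propagator `S(v) * S(u)⁻¹` is column-stochastic. -/
theorem stmt_1 (a b a' b' : ℝ → ℝ)
    (ha : ∀ t, HasDerivAt a (a' t) t) (hb : ∀ t, HasDerivAt b (b' t) t)
    (ha'cont : Continuous a') (hb'cont : Continuous b')
    (ha0 : ∀ t, 0 ≤ a t) (ha1 : ∀ t, a t ≤ 1)
    (hb0 : ∀ t, 0 ≤ b t) (hb1 : ∀ t, b t ≤ 1)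
    (hne : ∀ t, a t + b t ≠ 1)
    (S : ℝ → Matrix (Fin 2) (Fin 2) ℝ)
    (hSdef : ∀ t, S t = !![a t, 1 - b t; 1 - a t, b t])
    (u v : ℝ) (huv : u ≤ v)
    (hl1 : ∀ t ∈ Set.Icc u v,
      0 ≤ (-(a' t * b t - a t * b' t) - b' t) / (a t + b t - 1))
    (hl2 : ∀ t ∈ Set.Icc u v,
      0 ≤ ((a' t * b t - a t * b' t) - a' t) / (a t + b t - 1)) :
    (∀ i j, 0 ≤ (S v * (S u)⁻¹) i j) ∧ (∀ j, ∑ i, (S v * (S u)⁻¹) i j = 1) := by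
  classical
  have hd : ∀ t, a t + b t - 1 ≠ 0 := fun t => sub_ne_zero.mpr (hne t)
  have hca : Continuous a := continuous_iff_continuousAt.mpr fun t => (ha t).continuousAt
  have hcb : Continuous b := continuous_iff_continuousAt.mpr fun t => (hb t).continuousAt
  have hcd : Continuous (fun t => a t + b t - 1) := (hca.add hcb).sub continuous_const
  -- the "determinant" a t + b t - 1 has constant sign
  have hsign : ∀ t, 0 < (a u + b u - 1) * (a t + b t - 1) := by
    intro t
    rcases (mul_ne_zero (hd u) (hd t)).lt_or_gt with h | h
    · exfalso
      have h0 : (0:ℝ) ∈ Set.uIcc (a u + b u - 1) (a t + b t - 1) := by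
        rcases mul_neg_iff.mp h with ⟨h1, h2⟩ | ⟨h1, h2⟩
        · exact Set.mem_uIcc.mpr (Or.inr ⟨h2.le, h1.le⟩)
        · exact Set.mem_uIcc.mpr (Or.inl ⟨h1.le, h2.le⟩)
      obtain ⟨s, _, hs⟩ :=
        (intermediate_value_uIcc (hcd.continuousOn (s := Set.uIcc u t))) h0
      exact hd s hs
    · exact h
  have hratio : 0 < (a v + b v - 1) / (a u + b u - 1) := by
    have h2 := hsign v
    rcases mul_pos_iff.mp h2 with ⟨h3, h4⟩ | ⟨h3, h4⟩
    · exact div_pos h4 h3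
    · exact div_pos_of_neg_of_neg h4 h3
  have hDd : ∀ t, HasDerivAt (fun s => a s + b s - 1) (a' t + b' t) t :=
    fun t => ((ha t).add (hb t)).sub_const 1
  -- monotonicity helper
  have mono : ∀ F F' : ℝ → ℝ, (∀ t, HasDerivAt F (F' t) t) →
      (∀ t ∈ Set.Icc u v, 0 ≤ F' t) → F u ≤ F v := by
    intro F F' hF hF'
    have hm : MonotoneOn F (Set.Icc u v) := by
      apply monotoneOn_of_deriv_nonneg (convex_Icc u v)
        (fun t _ => (hF t).continuousAt.continuousWithinAt)
        (fun t ht => (hF t).differentiableAt.differentiableWithinAt)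
      intro t ht
      rw [interior_Icc] at ht
      rw [(hF t).deriv]
      exact hF' t ⟨ht.1.le, ht.2.le⟩
    exact hm ⟨le_refl u, huv⟩ ⟨huv, le_refl v⟩ huv
  -- row-0 entries as functions of the right endpoint
  have hF0 : ∀ (c : ℝ) (t : ℝ),
      HasDerivAt (fun s => (c * a s + (a u + b u - 1 - c) * (1 - b s)) / (a s + b s - 1))
        (((a u + b u - 1) * (a t + b t - 1)) / (a t + b t - 1)^2 *
          (((a' t * b t - a t * b' t) - a' t) / (a t + b t - 1))) t := by
    intro c t
    have hN : HasDerivAt (fun s => c * a s + (a u + b u - 1 - c) * (1 - b s))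
        (c * a' t + (a u + b u - 1 - c) * (-(b' t))) t :=
      ((ha t).const_mul c).add (((hb t).const_sub 1).const_mul (a u + b u - 1 - c))
    have h := hN.div (hDd t) (hd t)
    refine h.congr_deriv ?_
    field_simp [hd t]
    ring
  have hF1 : ∀ (c : ℝ) (t : ℝ),
      HasDerivAt (fun s => (c * (1 - a s) + (a u + b u - 1 - c) * b s) / (a s + b s - 1))
        (((a u + b u - 1) * (a t + b t - 1)) / (a t + b t - 1)^2 *
          ((-(a' t * b t - a t * b' t) - b' t) / (a t + b t - 1))) t := by
    intro c t
    have hN : HasDerivAt (fun s => c * (1 - a s) + (a u + b u - 1 - c) * b s)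
        (c * (-(a' t)) + (a u + b u - 1 - c) * b' t) t :=
      (((ha t).const_sub 1).const_mul c).add ((hb t).const_mul (a u + b u - 1 - c))
    have h := hN.div (hDd t) (hd t)
    refine h.congr_deriv ?_
    field_simp [hd t]
    ring
  have key0 : ∀ c : ℝ,
      (c * a u + (a u + b u - 1 - c) * (1 - b u)) / (a u + b u - 1) ≤
      (c * a v + (a u + b u - 1 - c) * (1 - b v)) / (a v + b v - 1) := by
    intro c
    refine mono _ _ (hF0 c) ?_
    intro t ht
    exact mul_nonneg (div_nonneg (hsign t).le (sq_nonneg _)) (hl2 t ht)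
  have key1 : ∀ c : ℝ,
      (c * (1 - a u) + (a u + b u - 1 - c) * b u) / (a u + b u - 1) ≤
      (c * (1 - a v) + (a u + b u - 1 - c) * b v) / (a v + b v - 1) := by
    intro c
    refine mono _ _ (hF1 c) ?_
    intro t ht
    exact mul_nonneg (div_nonneg (hsign t).le (sq_nonneg _)) (hl1 t ht)
  -- the four entry bounds (value of the F-functions at v is nonnegative)
  have e00 : 0 ≤ (b u * a v + (a u + b u - 1 - b u) * (1 - b v)) / (a v + b v - 1) := by
    have h1 : (b u * a u + (a u + b u - 1 - b u) * (1 - b u)) / (a u + b u - 1) = 1 := by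
      rw [div_eq_iff (hd u)]; ring
    have h2 := key0 (b u); rw [h1] at h2
    exact le_trans zero_le_one h2
  have e10 : 0 ≤ (b u * (1 - a v) + (a u + b u - 1 - b u) * b v) / (a v + b v - 1) := by
    refine le_trans (le_of_eq ?_) (key1 (b u))
    field_simp [hd u]
    ring
  have e01 : 0 ≤ ((b u - 1) * a v + (a u + b u - 1 - (b u - 1)) * (1 - b v)) / (a v + b v - 1) := by
    refine le_trans (le_of_eq ?_) (key0 (b u - 1))
    field_simp [hd u]
    ring
  have e11 : 0 ≤ ((b u - 1) * (1 - a v) + (a u + b u - 1 - (b u - 1)) * b v) / (a v + b v - 1) := by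
    have h1 : ((b u - 1) * (1 - a u) + (a u + b u - 1 - (b u - 1)) * b u) / (a u + b u - 1) = 1 := by
      rw [div_eq_iff (hd u)]; ring
    have h2 := key1 (b u - 1); rw [h1] at h2
    exact le_trans zero_le_one h2
  -- explicit inverse
  have hinv : (S u)⁻¹ = (a u + b u - 1)⁻¹ • !![b u, b u - 1; a u - 1, a u] := by
    apply Matrix.inv_eq_right_inv
    rw [hSdef, Matrix.mul_smul]
    ext i j
    fin_cases i <;> fin_cases j <;>
      simp [Matrix.mul_apply, Fin.sum_univ_two, Matrix.one_apply] <;>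
      field_simp [hd u] <;> ring_nf <;> simp
  -- explicit propagator
  have hPm : S v * (S u)⁻¹ =
      !![(b u * a v + (a u - 1) * (1 - b v)) / (a u + b u - 1),
         ((b u - 1) * a v + a u * (1 - b v)) / (a u + b u - 1);
         (b u * (1 - a v) + (a u - 1) * b v) / (a u + b u - 1),
         ((b u - 1) * (1 - a v) + a u * b v) / (a u + b u - 1)] := by
    rw [hinv, hSdef, Matrix.mul_smul]
    ext i j
    fin_cases i <;> fin_cases j <;>
      simp [Matrix.mul_apply, Fin.sum_univ_two] <;> ring
  have heq : ∀ X : ℝ, (X / (a v + b v - 1)) * ((a v + b v - 1) / (a u + b u - 1)) =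
      X / (a u + b u - 1) := by
    intro X
    rw [div_mul_div_comm, mul_comm X, mul_div_mul_left _ _ (hd v)]
  have n00 : 0 ≤ (b u * a v + (a u - 1) * (1 - b v)) / (a u + b u - 1) := by
    have h := mul_nonneg e00 hratio.le
    rw [heq] at h
    refine h.trans_eq ?_
    ring
  have n01 : 0 ≤ ((b u - 1) * a v + a u * (1 - b v)) / (a u + b u - 1) := by
    have h := mul_nonneg e01 hratio.le
    rw [heq] at h
    refine h.trans_eq ?_
    ring
  have n10 : 0 ≤ (b u * (1 - a v) + (a u - 1) * b v) / (a u + b u - 1) := by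
    have h := mul_nonneg e10 hratio.le
    rw [heq] at h
    refine h.trans_eq ?_
    ring
  have n11 : 0 ≤ ((b u - 1) * (1 - a v) + a u * b v) / (a u + b u - 1) := by
    have h := mul_nonneg e11 hratio.le
    rw [heq] at h
    refine h.trans_eq ?_
    ring
  constructor
  · intro i j
    fin_cases i <;> fin_cases j <;> rw [hPm]
    · simpa using n00
    · simpa using n01
    · simpa using n10
    · simpa using n11
  · intro j
    fin_cases j <;> rw [hPm] <;>
      simp [Fin.sum_univ_two] <;>
      rw [← add_div, div_eq_iff (hd u)] <;> ring
end

section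
/- Let a, b : ℝ → ℝ be continuously differentiable with 0 ≤ a(t) ≤ 1, 0 ≤ b(t) ≤ 1 and a(t) + b(t) ≠ 1 for all t, and set S(t) = !![a(t), 1 − b(t); 1 − a(t), b(t)]. Define, at each time t, r₁(t) = −a'(t)/(a(t) + b(t) − 1) and r₂(t) = −b'(t)/(a(t) + b(t) − 1). Let u ≤ v. If r₁(t) ≥ 0 and r₂(t) ≥ 0 for all t ∈ [u, v], then the right propagator (S(u))⁻¹ * S(v) is column-stochastic: all its entries are nonnegative and each of its columns sums to 1. -/
/-- If the right rates `r₁, r₂` of a classical 2-state dynamics are nonnegative on `[u, v]`,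
then the right propagator `S(u)⁻¹ * S(v)` is column-stochastic. -/
theorem stmt_2 (a b a' b' : ℝ → ℝ)
    (ha : ∀ t, HasDerivAt a (a' t) t) (hb : ∀ t, HasDerivAt b (b' t) t)
    (ha'cont : Continuous a') (hb'cont : Continuous b')
    (ha0 : ∀ t, 0 ≤ a t) (ha1 : ∀ t, a t ≤ 1)
    (hb0 : ∀ t, 0 ≤ b t) (hb1 : ∀ t, b t ≤ 1)
    (hne : ∀ t, a t + b t ≠ 1)
    (S : ℝ → Matrix (Fin 2) (Fin 2) ℝ)
    (hSdef : ∀ t, S t = !![a t, 1 - b t; 1 - a t, b t])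
    (u v : ℝ) (huv : u ≤ v)
    (hr1 : ∀ t ∈ Set.Icc u v, 0 ≤ -a' t / (a t + b t - 1))
    (hr2 : ∀ t ∈ Set.Icc u v, 0 ≤ -b' t / (a t + b t - 1)) :
    (∀ i j, 0 ≤ ((S u)⁻¹ * S v) i j) ∧ (∀ j, ∑ i, ((S u)⁻¹ * S v) i j = 1) := by
  have hca : Continuous a := continuous_iff_continuousAt.2 fun t => (ha t).continuousAt
  have hcb : Continuous b := continuous_iff_continuousAt.2 fun t => (hb t).continuousAt
  have hf0 : ∀ t, a t + b t - 1 ≠ 0 := fun t => sub_ne_zero.mpr (hne t)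
  have huu : u ∈ Set.Icc u v := ⟨le_refl u, huv⟩
  have hvv : v ∈ Set.Icc u v := ⟨huv, le_refl v⟩
  -- Matrix computation
  have hM : (S u)⁻¹ * S v = (a u + b u - 1)⁻¹ •
      !![a v + b u - 1, b u - b v; a u - a v, a u + b v - 1] := by
    rw [hSdef u, hSdef v, Matrix.inv_def, Matrix.adjugate_fin_two_of, Matrix.det_fin_two_of,
      Ring.inverse_eq_inv', Matrix.smul_mul]
    congr 1
    · ring_nf
    · ext i j
      fin_cases i <;> fin_cases j <;>
        simp [Matrix.mul_apply, Fin.sum_univ_two] <;> ring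
  have hsum : ∀ j, ∑ i, ((S u)⁻¹ * S v) i j = 1 := by
    intro j
    rw [hM]
    have hD : (-1 + b u + a u) ≠ 0 := by
      intro h; exact hf0 u (by linarith)
    fin_cases j <;>
      · simp [Fin.sum_univ_two]
        field_simp
        rw [div_eq_one_iff_eq (hf0 u)]
        ring
  -- sign constancy of a + b - 1
  have hsign : (∀ t ∈ Set.Icc u v, 0 < a t + b t - 1) ∨
      (∀ t ∈ Set.Icc u v, a t + b t - 1 < 0) := by
    set f := fun t => a t + b t - 1 with hf
    have hfc : Continuous f := (hca.add hcb).sub continuous_const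
    have key : ∀ s t : ℝ, 0 < f s → 0 < f t := by
      intro s t hs
      rcases lt_or_ge 0 (f t) with h | h
      · exact h
      · exfalso
        have h' : f t < 0 := lt_of_le_of_ne h (hf0 t)
        have hmem : (0:ℝ) ∈ Set.uIcc (f s) (f t) :=
          Set.mem_uIcc.mpr (Or.inr ⟨h'.le, hs.le⟩)
        obtain ⟨x, _, hx⟩ := intermediate_value_uIcc (hfc.continuousOn) hmem
        exact hf0 x hx
    rcases lt_or_ge 0 (f u) with h | h
    · exact Or.inl fun t _ => key u t h
    · refine Or.inr fun t ht => ?_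
      rcases lt_or_ge 0 (f t) with h' | h'
      · exact absurd (key t u h') (not_lt.mpr h)
      · exact lt_of_le_of_ne h' (hf0 t)
    -- end
  refine ⟨?_, hsum⟩
  rcases hsign with hpos | hneg
  · -- a, b antitone on [u,v]
    have ha'le : ∀ t ∈ Set.Icc u v, a' t ≤ 0 := by
      intro t ht
      have h := mul_nonneg (hr1 t ht) (hpos t ht).le
      rw [div_mul_cancel₀ _ (hf0 t)] at h
      linarith
    have hb'le : ∀ t ∈ Set.Icc u v, b' t ≤ 0 := by
      intro t ht
      have h := mul_nonneg (hr2 t ht) (hpos t ht).le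
      rw [div_mul_cancel₀ _ (hf0 t)] at h
      linarith
    have haA : AntitoneOn a (Set.Icc u v) := by
      refine antitoneOn_of_deriv_nonpos (convex_Icc u v) hca.continuousOn
        (fun x _ => (ha x).differentiableAt.differentiableWithinAt) (fun x hx => ?_)
      rw [interior_Icc] at hx
      rw [(ha x).deriv]
      exact ha'le x (Set.Ioo_subset_Icc_self hx)
    have hbA : AntitoneOn b (Set.Icc u v) := by
      refine antitoneOn_of_deriv_nonpos (convex_Icc u v) hcb.continuousOn
        (fun x _ => (hb x).differentiableAt.differentiableWithinAt) (fun x hx => ?_)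
      rw [interior_Icc] at hx
      rw [(hb x).deriv]
      exact hb'le x (Set.Ioo_subset_Icc_self hx)
    have hav : a v ≤ a u := haA huu hvv huv
    have hbv : b v ≤ b u := hbA huu hvv huv
    have hDu : 0 < a u + b u - 1 := hpos u huu
    have hDv : 0 < a v + b v - 1 := hpos v hvv
    intro i j
    rw [hM]
    have hinv : 0 ≤ (a u + b u - 1)⁻¹ := inv_nonneg.mpr hDu.le
    fin_cases i <;> fin_cases j <;> simp <;> apply mul_nonneg hinv <;> linarith
  · -- a, b monotone on [u,v]
    have ha'ge : ∀ t ∈ Set.Icc u v, 0 ≤ a' t := by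
      intro t ht
      have h := mul_nonneg (hr1 t ht) (neg_nonneg.mpr (hneg t ht).le)
      have heq : -a' t / (a t + b t - 1) * -(a t + b t - 1) = a' t := by
        field_simp
        rw [div_eq_iff (hf0 t)]
      rw [heq] at h; exact h
    have hb'ge : ∀ t ∈ Set.Icc u v, 0 ≤ b' t := by
      intro t ht
      have h := mul_nonneg (hr2 t ht) (neg_nonneg.mpr (hneg t ht).le)
      have heq : -b' t / (a t + b t - 1) * -(a t + b t - 1) = b' t := by
        field_simp
        rw [div_eq_iff (hf0 t)]
      rw [heq] at h; exact h
    have haM : MonotoneOn a (Set.Icc u v) := by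
      refine monotoneOn_of_deriv_nonneg (convex_Icc u v) hca.continuousOn
        (fun x _ => (ha x).differentiableAt.differentiableWithinAt) (fun x hx => ?_)
      rw [interior_Icc] at hx
      rw [(ha x).deriv]
      exact ha'ge x (Set.Ioo_subset_Icc_self hx)
    have hbM : MonotoneOn b (Set.Icc u v) := by
      refine monotoneOn_of_deriv_nonneg (convex_Icc u v) hcb.continuousOn
        (fun x _ => (hb x).differentiableAt.differentiableWithinAt) (fun x hx => ?_)
      rw [interior_Icc] at hx
      rw [(hb x).deriv]
      exact hb'ge x (Set.Ioo_subset_Icc_self hx)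
    have hav : a u ≤ a v := haM huu hvv huv
    have hbv : b u ≤ b v := hbM huu hvv huv
    have hDu : a u + b u - 1 < 0 := hneg u huu
    have hDv : a v + b v - 1 < 0 := hneg v hvv
    intro i j
    rw [hM]
    have hinv : (a u + b u - 1)⁻¹ ≤ 0 := inv_nonpos.mpr hDu.le
    fin_cases i <;> fin_cases j <;> simp <;> nlinarith [hinv, hav, hbv, hDu, hDv]
end

section
/- Let a, b, a', b' be real numbers with 0 ≤ a ≤ 1, 0 ≤ b ≤ 1 and a + b − 1 ≠ 0. Set w = a'·b − a·b', ℓ₁ = (−w − b')/(a + b − 1), ℓ₂ = (w − a')/(a + b − 1), r₁ = −a'/(a + b − 1), r₂ = −b'/(a + b − 1). If r₁ ≥ 0 and r₂ ≥ 0, then ℓ₁ ≥ 0 and ℓ₂ ≥ 0. (For the classical 2-state system, Heisenberg divisibility implies Schrödinger divisibility.) -/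
/-- For the classical 2-state system, Heisenberg divisibility (nonnegativity of the right
rates `r₁, r₂`) implies Schrödinger divisibility (nonnegativity of the left rates `ℓ₁, ℓ₂`). -/
theorem stmt_3 (a b a' b' : ℝ)
    (ha0 : 0 ≤ a) (ha1 : a ≤ 1) (hb0 : 0 ≤ b) (hb1 : b ≤ 1)
    (hne : a + b - 1 ≠ 0)
    (hr1 : 0 ≤ -a' / (a + b - 1)) (hr2 : 0 ≤ -b' / (a + b - 1)) :
    0 ≤ (-(a' * b - a * b') - b') / (a + b - 1) ∧
      0 ≤ ((a' * b - a * b') - a') / (a + b - 1) := by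
  rcases hne.lt_or_gt with hd | hd
  · have h1 : 0 ≤ a' := by
      rcases div_nonneg_iff.mp hr1 with ⟨_, h⟩ | ⟨h, _⟩ <;> linarith
    have h2 : 0 ≤ b' := by
      rcases div_nonneg_iff.mp hr2 with ⟨_, h⟩ | ⟨h, _⟩ <;> linarith
    constructor <;> apply div_nonneg_of_nonpos <;> nlinarith
  · have h1 : a' ≤ 0 := by
      rcases div_nonneg_iff.mp hr1 with ⟨h, _⟩ | ⟨_, h⟩ <;> linarith
    have h2 : b' ≤ 0 := by
      rcases div_nonneg_iff.mp hr2 with ⟨h, _⟩ | ⟨_, h⟩ <;> linarith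
    constructor <;> apply div_nonneg _ hd.le <;> nlinarith
end

section
/- Let n be a nonempty finite type and let A be a Hermitian matrix in Matrix n n ℂ. Then ‖A‖ is the greatest element of the set { |tr(A * ρ)| : ρ a density matrix }, i.e. |tr(A * ρ)| ≤ ‖A‖ for every density matrix ρ, and there exists a density matrix ρ with |tr(A * ρ)| = ‖A‖. -/
open scoped Matrix.Norms.L2Operator ComplexOrder

open scoped MatrixOrder in
open Matrix in
/-- Upper bound: `|tr(A ρ)| ≤ ‖A‖` for any density matrix `ρ`. -/
lemma trace_bound {n : Type*} [Fintype n] [DecidableEq n]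
    (A : Matrix n n ℂ) {ρ : Matrix n n ℂ} (hρ : ρ.PosSemidef)
    (hτ : ρ.trace = 1) : ‖(A * ρ).trace‖ ≤ ‖A‖ := by
  obtain ⟨B, hB⟩ := CStarAlgebra.nonneg_iff_eq_star_mul_self.mp hρ.nonneg
  rw [star_eq_conjTranspose] at hB; subst hB
  set T := Matrix.toEuclideanCLM (𝕜 := ℂ) (n := n) A with hT
  set x : n → EuclideanSpace ℂ n := fun i => (WithLp.equiv 2 (n → ℂ)).symm (star (B i)) with hx
  have hentry : ∀ i, (B * A * Bᴴ) i i = @inner ℂ _ _ (x i) (T (x i)) := by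
    intro i
    simp only [hx, hT, Matrix.toEuclideanCLM_toLp, Matrix.toLin'_apply,
      mul_apply, conjTranspose_apply, PiLp.inner_apply, RCLike.inner_apply,
      WithLp.equiv_symm_apply, PiLp.toLp_apply, Pi.star_apply, star_star, starRingEnd_apply, mulVec, dotProduct]
    simp only [Finset.sum_mul]
    rw [Finset.sum_comm]
    exact Finset.sum_congr rfl fun j _ => Finset.sum_congr rfl fun k _ => by ring
  have hnormsq : ∀ i, @inner ℂ _ _ (x i) (x i) = ((‖x i‖ : ℂ)) ^ 2 := fun i =>
    inner_self_eq_norm_sq_to_K (x i)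
  have hsum : ∑ i, ‖x i‖ ^ 2 = 1 := by
    have h1 : (Bᴴ * B).trace = ∑ i, ((‖x i‖ : ℂ)) ^ 2 := by
      simp only [← hnormsq]
      simp only [← hnormsq, hx, PiLp.inner_apply, RCLike.inner_apply,
        WithLp.equiv_symm_apply, PiLp.toLp_apply, Pi.star_apply, star_star, starRingEnd_apply,
        trace, diag, mul_apply, conjTranspose_apply]
      rw [Finset.sum_comm]
    rw [hτ] at h1
    exact_mod_cast h1.symm
  have htrace : (A * (Bᴴ * B)).trace = ∑ i, @inner ℂ _ _ (x i) (T (x i)) := by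
    rw [Matrix.trace_mul_comm, ← Matrix.trace_mul_cycle]
    simp only [Matrix.trace, Matrix.diag, hentry]
  rw [htrace]
  have hTnorm : ‖T‖ = ‖A‖ := (Matrix.cstar_norm_def A).symm
  calc ‖∑ i, @inner ℂ _ _ (x i) (T (x i))‖
      ≤ ∑ i, ‖@inner ℂ _ _ (x i) (T (x i))‖ := by
        exact norm_sum_le _ _
    _ ≤ ∑ i, ‖A‖ * ‖x i‖ ^ 2 := by
        refine Finset.sum_le_sum fun i _ => ?_
        calc ‖@inner ℂ _ _ (x i) (T (x i))‖ ≤ ‖x i‖ * ‖T (x i)‖ := norm_inner_le_norm _ _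
          _ ≤ ‖x i‖ * (‖T‖ * ‖x i‖) := by
              gcongr; exact T.le_opNorm _
          _ = ‖A‖ * ‖x i‖ ^ 2 := by rw [hTnorm]; ring
    _ = ‖A‖ := by rw [← Finset.mul_sum, hsum, mul_one]

open Matrix in
/-- Norm of the diagonal eigenvalue matrix is at most the max eigenvalue modulus. -/
lemma diag_norm_le {n : Type*} [Fintype n] [DecidableEq n] (lam : n → ℝ) (M : ℝ)
    (hM : 0 ≤ M) (hle : ∀ i, |lam i| ≤ M) :
    ‖(Matrix.diagonal (fun i => (lam i : ℂ)) : Matrix n n ℂ)‖ ≤ M := by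
  rw [Matrix.l2_opNorm_def]
  refine ContinuousLinearMap.opNorm_le_bound _ hM fun y => ?_
  set z : EuclideanSpace ℂ n := (Matrix.toEuclideanLin.trans LinearMap.toContinuousLinearMap
      (Matrix.diagonal (fun i => (lam i : ℂ)))) y with hz
  have hval : ∀ i, ‖z i‖ ≤ M * ‖y i‖ := by
    intro i
    have hzi : z i = (lam i : ℂ) * y i := by
      simp [hz, Matrix.toEuclideanLin_apply, WithLp.equiv_symm_apply, PiLp.toLp_apply,
        Matrix.mulVec_diagonal]
    rw [hzi, norm_mul, Complex.norm_real, Real.norm_eq_abs]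
    exact mul_le_mul_of_nonneg_right (hle i) (norm_nonneg _)
  have h1 : ‖z‖ ≤ Real.sqrt (∑ i, (M * ‖y i‖) ^ 2) := by
    rw [EuclideanSpace.norm_eq]
    exact Real.sqrt_le_sqrt <| Finset.sum_le_sum fun i _ =>
      pow_le_pow_left₀ (norm_nonneg _) (hval i) 2
  have h2 : Real.sqrt (∑ i, (M * ‖y i‖) ^ 2) = M * ‖y‖ := by
    rw [EuclideanSpace.norm_eq]
    simp only [mul_pow, ← Finset.mul_sum]
    rw [Real.sqrt_mul (sq_nonneg M), Real.sqrt_sq hM]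
  exact h1.trans_eq h2

/-- For a Hermitian matrix `A`, the operator norm `‖A‖` is the greatest value of
`|tr(A ρ)|` over density matrices `ρ`. -/
theorem stmt_5 (n : Type*) [Fintype n] [Nonempty n] [DecidableEq n]
    (A : Matrix n n ℂ) (hA : A.IsHermitian) :
    IsGreatest {x : ℝ | ∃ ρ : Matrix n n ℂ, ρ.PosSemidef ∧ ρ.trace = 1 ∧
      x = ‖(A * ρ).trace‖} ‖A‖ := by
  classical
  obtain ⟨i₀, hi₀⟩ : ∃ i₀ : n, ∀ i, |hA.eigenvalues i| ≤ |hA.eigenvalues i₀| :=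
    Finite.exists_max fun i => |hA.eigenvalues i|
  set lam : n → ℝ := hA.eigenvalues with hlam
  set v : n → ℂ := ⇑(hA.eigenvectorBasis i₀) with hv
  set ρ : Matrix n n ℂ := Matrix.vecMulVec v (star v) with hρ
  -- the vector v has norm one
  have hv1 : ∑ i, v i * star (v i) = 1 := by
    have h1 := hA.eigenvectorBasis.orthonormal.1 i₀
    have h2 : @inner ℂ _ _ (hA.eigenvectorBasis i₀) (hA.eigenvectorBasis i₀) = 1 := by
      rw [inner_self_eq_norm_sq_to_K, h1]; norm_num
    rw [PiLp.inner_apply] at h2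
    simp only [RCLike.inner_apply] at h2
    rw [← h2]
    exact Finset.sum_congr rfl fun i _ => rfl
  -- ρ is a density matrix
  have hρpsd : ρ.PosSemidef := by
    refine Matrix.PosSemidef.of_dotProduct_mulVec_nonneg ?_ ?_
    · ext j k
      simp [hρ, Matrix.conjTranspose_apply, Matrix.vecMulVec_apply, mul_comm]
    · intro y
      have key : dotProduct (star y) (ρ.mulVec y) =
          star (dotProduct (star v) y) * (dotProduct (star v) y) := by
        simp only [hρ, dotProduct, Matrix.mulVec, Matrix.vecMulVec_apply,
          Pi.star_apply, star_sum, star_mul', star_star, Finset.mul_sum, Finset.sum_mul]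
        rw [Finset.sum_comm]
        exact Finset.sum_congr rfl fun j _ => Finset.sum_congr rfl fun k _ => by ring
      rw [key]
      exact star_mul_self_nonneg _
  have hρtr : ρ.trace = 1 := by
    simp only [hρ, Matrix.trace, Matrix.diag, Matrix.vecMulVec_apply]
    exact hv1
  -- trace of A * ρ is the top eigenvalue
  have htr : (A * ρ).trace = (lam i₀ : ℂ) := by
    have hmv := hA.mulVec_eigenvectorBasis i₀
    simp only [Matrix.trace, Matrix.diag, Matrix.mul_apply, hρ, Matrix.vecMulVec_apply,
      Pi.star_apply]
    have : ∀ i, ∑ j, A i j * (v j * star (v i)) = (lam i₀ : ℂ) * (v i * star (v i)) := by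
      intro i
      have : ∑ j, A i j * v j = (lam i₀ : ℂ) * v i := by
        have := congrFun hmv i
        simpa [Matrix.mulVec, dotProduct, Pi.smul_apply, Complex.real_smul] using this
      calc ∑ j, A i j * (v j * star (v i)) = (∑ j, A i j * v j) * star (v i) := by
            rw [Finset.sum_mul]; exact Finset.sum_congr rfl fun j _ => by ring
        _ = (lam i₀ : ℂ) * (v i * star (v i)) := by rw [this]; ring
    rw [Finset.sum_congr rfl fun i _ => this i, ← Finset.mul_sum, hv1, mul_one]
  have habs : ‖(A * ρ).trace‖ = |lam i₀| := by
    rw [htr, Complex.norm_real, Real.norm_eq_abs]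
  -- norm of A equals |lam i₀|
  have hub : ∀ x ∈ {x : ℝ | ∃ ρ : Matrix n n ℂ, ρ.PosSemidef ∧ ρ.trace = 1 ∧
      x = ‖(A * ρ).trace‖}, x ≤ ‖A‖ := by
    rintro x ⟨σ, h1, h2, rfl⟩
    exact trace_bound A h1 h2
  have hgeA : |lam i₀| ≤ ‖A‖ := by
    rw [← habs]
    exact hub _ ⟨ρ, hρpsd, hρtr, rfl⟩
  have hleA : ‖A‖ ≤ |lam i₀| := by
    have hdiag : (Matrix.diagonal (RCLike.ofReal ∘ lam) : Matrix n n ℂ)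
        = Matrix.diagonal (fun i => (lam i : ℂ)) := rfl
    nth_rewrite 1 [hA.spectral_theorem]
    have hUstar : (star (Matrix.IsHermitian.eigenvectorUnitary hA : Matrix n n ℂ))
        = ((star (Matrix.IsHermitian.eigenvectorUnitary hA) : Matrix.unitaryGroup n ℂ) :
          Matrix n n ℂ) := rfl
    rw [Unitary.conjStarAlgAut_apply, mul_assoc, CStarRing.norm_coe_unitary_mul, hdiag]
    calc ‖Matrix.diagonal (fun i => (lam i : ℂ)) *
          ((star (Matrix.IsHermitian.eigenvectorUnitary hA) : Matrix.unitaryGroup n ℂ) :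
            Matrix n n ℂ)‖
        = ‖Matrix.diagonal (fun i => (lam i : ℂ))‖ := CStarRing.norm_mul_coe_unitary _ _
      _ ≤ |lam i₀| := diag_norm_le lam _ (abs_nonneg _) hi₀
  have hnorm : ‖A‖ = |lam i₀| := le_antisymm hleA hgeA
  constructor
  · exact ⟨ρ, hρpsd, hρtr, by rw [habs, hnorm]⟩
  · exact hub
end

section
/- Let n be a nonempty finite type and let E, F be effects in Matrix n n ℂ. For a density matrix ρ let p_E(ρ) = Re tr(E * ρ) and p_F(ρ) = Re tr(F * ρ). Then (1 − ‖E − F‖)/2 is the least element of the set { (1/2)·( min(p_E(ρ), p_F(ρ)) + min(1 − p_E(ρ), 1 − p_F(ρ)) ) : ρ a density matrix }; i.e. the optimal single-shot error probability of discriminating the effects E and F equals (1 − ‖E − F‖)/2. Equivalently, the optimal guessing probability is (1 + ‖E − F‖)/2. -/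
open scoped Matrix.Norms.L2Operator ComplexOrder

section StmtAux

open Matrix

variable {n : Type*} [Fintype n] [DecidableEq n]

noncomputable instance cstarMatAux : CStarAlgebra (Matrix n n ℂ) := Matrix.instCStarAlgebra

private lemma min_add_min_aux (a b : ℝ) : min a b + min (1 - a) (1 - b) = 1 - |a - b| := by
  rcases le_total a b with h | h
  · rw [min_eq_left h, min_eq_right (by linarith), abs_of_nonpos (by linarith)]; ring
  · rw [min_eq_right h, min_eq_left (by linarith), abs_of_nonneg (by linarith)]; ring

private lemma inner_bound_aux (D : Matrix n n ℂ) (x : EuclideanSpace ℂ n) (hx : ‖x‖ = 1) :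
    ‖dotProduct (star ((WithLp.equiv 2 (n → ℂ)) x))
      (D *ᵥ ((WithLp.equiv 2 (n → ℂ)) x))‖ ≤ ‖D‖ := by
  have h : dotProduct (star ((WithLp.equiv 2 (n → ℂ)) x)) (D *ᵥ ((WithLp.equiv 2 (n → ℂ)) x))
      = inner ℂ x ((EuclideanSpace.equiv n ℂ).symm (D *ᵥ ((WithLp.equiv 2 (n → ℂ)) x))) := by
    rw [EuclideanSpace.inner_eq_star_dotProduct, dotProduct_comm]; rfl
  rw [h]
  calc ‖(inner ℂ x ((EuclideanSpace.equiv n ℂ).symm (D *ᵥ ((WithLp.equiv 2 (n → ℂ)) x))) : ℂ)‖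
      ≤ ‖x‖ * ‖(EuclideanSpace.equiv n ℂ).symm (D *ᵥ ((WithLp.equiv 2 (n → ℂ)) x))‖ :=
        norm_inner_le_norm _ _
    _ ≤ ‖x‖ * (‖D‖ * ‖x‖) := by
        gcongr
        exact D.l2_opNorm_mulVec x
    _ = ‖D‖ := by rw [hx]; ring

private lemma trace_bound_aux (D ρ : Matrix n n ℂ) (hρ : ρ.PosSemidef)
    (hτ : ρ.trace = 1) :
    |((D * ρ).trace).re| ≤ ‖D‖ := by
  have hH := hρ.1
  set U : Matrix n n ℂ := (hH.eigenvectorUnitary : Matrix n n ℂ) with hU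
  set dg : Matrix n n ℂ := diagonal (RCLike.ofReal ∘ hH.eigenvalues) with hdg
  have hspec : ρ = U * dg * star U := hH.spectral_theorem
  have h1 : (D * ρ).trace = ((star U * D * U) * dg).trace := by
    rw [hspec]
    rw [show D * (U * dg * star U) = (D * (U * dg)) * star U by simp only [mul_assoc]]
    rw [trace_mul_comm]
    rw [show star U * (D * (U * dg)) = (star U * D * U) * dg by simp only [mul_assoc]]
  have h2 : ((star U * D * U) * dg).trace
      = ∑ i, (star U * D * U) i i * (hH.eigenvalues i : ℂ) := by
    simp [Matrix.trace, Matrix.diag, hdg, Matrix.mul_diagonal]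
  have h3 : ∀ i, (star U * D * U) i i =
      dotProduct (star (⇑(hH.eigenvectorBasis i))) (D *ᵥ ⇑(hH.eigenvectorBasis i)) := by
    intro i
    simp only [Matrix.mul_apply, dotProduct, Matrix.mulVec, Matrix.star_apply,
      dotProduct, hU, Matrix.IsHermitian.eigenvectorUnitary_apply, Pi.star_apply,
      Finset.mul_sum, Finset.sum_mul]
    rw [Finset.sum_comm]
    congr 1; ext j; congr 1; ext k; ring
  have hnorm1 : ∀ i, ‖hH.eigenvectorBasis i‖ = 1 := fun i => hH.eigenvectorBasis.orthonormal.1 i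
  have h4 : ∀ i, |((star U * D * U) i i).re| ≤ ‖D‖ := by
    intro i
    refine le_trans (Complex.abs_re_le_norm _) ?_
    rw [h3 i]
    exact inner_bound_aux D (hH.eigenvectorBasis i) (hnorm1 i)
  have hev0 : ∀ i, 0 ≤ hH.eigenvalues i := hρ.eigenvalues_nonneg
  have hsum : ∑ i, hH.eigenvalues i = 1 := by
    have : ρ.trace = ∑ i, (hH.eigenvalues i : ℂ) := by
      conv_lhs => rw [hspec]
      rw [trace_mul_comm, ← mul_assoc, Unitary.coe_star_mul_self, one_mul, hdg]
      simp [Matrix.trace_diagonal]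
    rw [hτ] at this
    exact_mod_cast congrArg Complex.re this.symm
  rw [h1, h2]
  have hre : (∑ i, (star U * D * U) i i * (hH.eigenvalues i : ℂ)).re
      = ∑ i, ((star U * D * U) i i).re * hH.eigenvalues i := by
    rw [Complex.re_sum]
    congr 1; ext i
    rw [Complex.mul_re]
    simp
  rw [hre]
  calc |∑ i, ((star U * D * U) i i).re * hH.eigenvalues i|
      ≤ ∑ i, |((star U * D * U) i i).re * hH.eigenvalues i| := Finset.abs_sum_le_sum_abs _ _
    _ ≤ ∑ i, ‖D‖ * hH.eigenvalues i := by
        refine Finset.sum_le_sum fun i _ => ?_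
        rw [abs_mul, abs_of_nonneg (hev0 i)]
        exact mul_le_mul_of_nonneg_right (h4 i) (hev0 i)
    _ = ‖D‖ := by rw [← Finset.mul_sum, hsum, mul_one]

private lemma exists_density_aux [Nonempty n] (D : Matrix n n ℂ) (hD : D.IsHermitian) :
    ∃ ρ : Matrix n n ℂ, ρ.PosSemidef ∧ ρ.trace = 1 ∧ |((D * ρ).trace).re| = ‖D‖ := by
  obtain ⟨i, hi⟩ : ∃ i, |hD.eigenvalues i| = ‖D‖ := by
    have h := CStarAlgebra.norm_or_neg_norm_mem_spectrum (a := D) hD.isSelfAdjoint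
    rw [hD.spectrum_real_eq_range_eigenvalues] at h
    rcases h with ⟨i, hi⟩ | ⟨i, hi⟩
    · exact ⟨i, by rw [hi]; exact abs_of_nonneg (norm_nonneg _)⟩
    · exact ⟨i, by rw [hi]; simp⟩
  set v : n → ℂ := ⇑(hD.eigenvectorBasis i) with hv
  have hvv : ∑ j, star (v j) * v j = 1 := by
    have := hD.eigenvectorBasis.orthonormal.1 i
    have h2 : (inner ℂ (hD.eigenvectorBasis i) (hD.eigenvectorBasis i) : ℂ) = 1 := by
      rw [inner_self_eq_norm_sq_to_K, this]; norm_num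
    rw [EuclideanSpace.inner_eq_star_dotProduct, dotProduct_comm] at h2
    simpa [dotProduct] using h2
  refine ⟨Matrix.of fun j k => v j * star (v k), posSemidef_iff_dotProduct_mulVec.mpr ⟨?_, ?_⟩, ?_, ?_⟩
  · ext j k
    simp [Matrix.conjTranspose_apply, mul_comm]
  · intro x
    have key : dotProduct (star x) ((Matrix.of fun j k => v j * star (v k)) *ᵥ x)
        = star (dotProduct (star v) x) * (dotProduct (star v) x) := by
      simp only [dotProduct, Matrix.mulVec, Matrix.of_apply, star_sum, star_mul',
        star_star, Pi.star_apply, Finset.mul_sum, Finset.sum_mul]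
      rw [Finset.sum_comm]
      congr 1; ext j; congr 1; ext k; ring
    rw [key]
    exact star_mul_self_nonneg _
  · simp only [Matrix.trace, Matrix.diag, Matrix.of_apply]
    rw [← hvv]
    congr 1; ext j; ring
  · have hmul : D *ᵥ v = (hD.eigenvalues i : ℝ) • v := hD.mulVec_eigenvectorBasis i
    have htr : (D * Matrix.of fun j k => v j * star (v k)).trace
        = ∑ j, star (v j) * (D *ᵥ v) j := by
      simp only [Matrix.trace, Matrix.diag, Matrix.mul_apply, Matrix.of_apply, Matrix.mulVec,
        dotProduct, Finset.mul_sum]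
      congr 1; ext j; congr 1; ext k; ring
    rw [htr, hmul]
    have : ∑ j, star (v j) * ((hD.eigenvalues i : ℝ) • v) j
        = (hD.eigenvalues i : ℂ) * ∑ j, star (v j) * v j := by
      rw [Finset.mul_sum]
      congr 1; ext j
      simp [Complex.real_smul]
      ring
    rw [this, hvv, mul_one]
    simpa using hi

end StmtAux

/-- The optimal single-shot error probability of discriminating two effects `E`, `F`
equals `(1 - ‖E - F‖)/2`; equivalently the optimal guessing probability is
`(1 + ‖E - F‖)/2`. -/
theorem stmt_6 (n : Type*) [Fintype n] [Nonempty n] [DecidableEq n]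
    (E F : Matrix n n ℂ)
    (hE : E.PosSemidef) (hE' : (1 - E).PosSemidef)
    (hF : F.PosSemidef) (hF' : (1 - F).PosSemidef) :
    IsLeast {x : ℝ | ∃ ρ : Matrix n n ℂ, ρ.PosSemidef ∧ ρ.trace = 1 ∧
      x = (1 / 2) * (min ((E * ρ).trace.re) ((F * ρ).trace.re)
        + min (1 - (E * ρ).trace.re) (1 - (F * ρ).trace.re))}
      ((1 - ‖E - F‖) / 2) := by
  have hD : (E - F).IsHermitian := hE.1.sub hF.1
  have hdiff : ∀ ρ : Matrix n n ℂ, (E * ρ).trace.re - (F * ρ).trace.re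
      = (((E - F) * ρ).trace).re := by
    intro ρ
    rw [Matrix.sub_mul, Matrix.trace_sub, Complex.sub_re]
  constructor
  · obtain ⟨ρ, hρ, hτ, habs⟩ := exists_density_aux (E - F) hD
    refine ⟨ρ, hρ, hτ, ?_⟩
    rw [min_add_min_aux, hdiff, habs]
    ring
  · rintro x ⟨ρ, hρ, hτ, rfl⟩
    rw [min_add_min_aux, hdiff]
    have := trace_bound_aux (E - F) ρ hρ hτ
    linarith
end

section
/- Let n be a finite type, let D be an invertible diagonal real matrix in Matrix n n ℝ, and let B be an antisymmetric real matrix (Bᵀ = −B). Set X = D⁻¹ * B * D − D * B * D⁻¹. Then X is symmetric (Xᵀ = X), has trace zero, and if X ≠ 0 then −X is not positive semidefinite (i.e. X is not negative semidefinite). -/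
open scoped Matrix

lemma psd_trace_zero_aux {n : Type*} [Fintype n] [DecidableEq n] {M : Matrix n n ℝ}
    (h : M.PosSemidef) (ht : M.trace = 0) : M = 0 := by
  have hdiag : ∀ i, 0 ≤ M i i := fun i => by
    have := h.dotProduct_mulVec_nonneg (Pi.single i 1)
    simpa [Matrix.mulVec_single, dotProduct, Pi.single_apply] using this
  have hsum : ∑ i, M i i = 0 := ht
  have hzero : ∀ i, M i i = 0 := by
    intro i
    have := (Finset.sum_eq_zero_iff_of_nonneg (fun i _ => hdiag i)).mp hsum
    exact this i (Finset.mem_univ i)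
  have hcol : ∀ i, M *ᵥ Pi.single i 1 = 0 := by
    intro i
    rw [← h.dotProduct_mulVec_zero_iff]
    simpa [Matrix.mulVec_single, dotProduct, Pi.single_apply] using hzero i
  ext i j
  have := congrFun (hcol j) i
  simpa [Matrix.mulVec_single] using this

/-- For `D` diagonal invertible and `B` antisymmetric, `X = D⁻¹ B D - D B D⁻¹` is
symmetric, traceless, and (if nonzero) not negative semidefinite. -/
theorem stmt_8 (n : Type*) [Fintype n] [DecidableEq n]
    (D B : Matrix n n ℝ) (hD : D.IsDiag) (hDunit : IsUnit D.det)
    (hB : Bᵀ = -B) :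
    let X : Matrix n n ℝ := D⁻¹ * B * D - D * B * D⁻¹
    Xᵀ = X ∧ X.trace = 0 ∧ (X ≠ 0 → ¬ (-X).PosSemidef) := by
  intro X
  have hDt : Dᵀ = D := by
    ext i j
    by_cases h : i = j
    · simp [h]
    · rw [Matrix.transpose_apply, hD h, hD (Ne.symm h)]
  have hDinvt : (D⁻¹)ᵀ = D⁻¹ := by rw [Matrix.transpose_nonsing_inv, hDt]
  have hsym : Xᵀ = X := by
    show (D⁻¹ * B * D - D * B * D⁻¹)ᵀ = D⁻¹ * B * D - D * B * D⁻¹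
    simp only [Matrix.transpose_sub, Matrix.transpose_mul, hDt, hDinvt, hB,
      Matrix.mul_neg, Matrix.neg_mul, Matrix.mul_assoc]
    abel
  have htr : X.trace = 0 := by
    show (D⁻¹ * B * D - D * B * D⁻¹).trace = 0
    rw [Matrix.trace_sub, Matrix.trace_mul_cycle D⁻¹ B D, Matrix.trace_mul_cycle D B D⁻¹,
      Matrix.mul_nonsing_inv _ hDunit, Matrix.nonsing_inv_mul _ hDunit, sub_self]
  refine ⟨hsym, htr, fun hX hpsd => ?_⟩
  have : -X = 0 := psd_trace_zero_aux hpsd (by simp [htr])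
  exact hX (by simpa using congrArg Neg.neg this)
end

section
/- Let n be a finite type and let G : ℝ → Matrix n n ℂ be differentiable with G(0) = 0 and such that G(t) commutes with G'(t') for all t, t' (i.e. G(t) * G'(t') = G'(t') * G(t)). Then for every t, the map t ↦ exp(G(t)) has derivative G'(t) * exp(G(t)) = exp(G(t)) * G'(t); in particular the left and right generators of the dynamical map Φ(t) = exp(G(t)) both coincide with G'(t). -/
attribute [local instance] Matrix.linftyOpNormedAddCommGroup Matrix.linftyOpNormedRing
  Matrix.linftyOpNormedAlgebra

/-- If `G` is differentiable with `G(0) = 0` and `G(t)` commutes with `G'(t')` for all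
`t, t'`, then `t ↦ exp(G(t))` has derivative `G'(t) * exp(G(t)) = exp(G(t)) * G'(t)`:
the left and right generators of `Φ(t) = exp(G(t))` both coincide with `G'(t)`. -/
theorem stmt_10 (n : Type*) [Fintype n] [DecidableEq n]
    (G G' : ℝ → Matrix n n ℂ)
    (hG : ∀ t : ℝ, HasDerivAt G (G' t) t) (hG0 : G 0 = 0)
    (hcomm : ∀ t t' : ℝ, G t * G' t' = G' t' * G t) :
    ∀ t : ℝ,
      HasDerivAt (fun s => NormedSpace.exp (G s)) (G' t * NormedSpace.exp (G t)) t ∧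
      G' t * NormedSpace.exp (G t) = NormedSpace.exp (G t) * G' t := by
  intro t
  -- G s commutes with G t for all s
  have hGG : ∀ s : ℝ, Commute (G s) (G t) := by
    intro s
    have hdiff : Differentiable ℝ (fun u => G u * G t - G t * G u) := fun u =>
      (((hG u).mul_const (G t)).sub ((hG u).const_mul (G t))).differentiableAt
    have hderiv : ∀ u : ℝ, deriv (fun u => G u * G t - G t * G u) u = 0 := by
      intro u
      have h : HasDerivAt (fun u => G u * G t - G t * G u)
          (G' u * G t - G t * G' u) u :=
        ((hG u).mul_const (G t)).sub ((hG u).const_mul (G t))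
      exact h.deriv.trans (by rw [← hcomm t u, sub_self])
    have := is_const_of_deriv_eq_zero hdiff hderiv s t
    simpa [Commute, SemiconjBy, sub_eq_zero] using this
  -- the key derivative computation
  have hmain : HasDerivAt (fun s => NormedSpace.exp (G s))
      (G' t * NormedSpace.exp (G t)) t := by
    have hsplit : (fun s => NormedSpace.exp (G s)) =
        fun s => NormedSpace.exp (G s - G t) * NormedSpace.exp (G t) := by
      funext s
      refine Eq.trans ?_ (NormedSpace.exp_add_of_commute (((hGG s).sub_left (Commute.refl (G t)))))
      congr 1
      abel
    rw [hsplit]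
    have h1 : HasDerivAt (fun s => G s - G t) (G' t) t := (hG t).sub_const _
    have h2 : HasFDerivAt (NormedSpace.exp)
        (1 : Matrix n n ℂ →L[ℂ] Matrix n n ℂ) (G t - G t) := by
      rw [sub_self]
      exact hasFDerivAt_exp_zero
    have h3 : HasDerivAt (fun s => NormedSpace.exp (G s - G t)) (G' t) t := by
      have := (h2.restrictScalars ℝ).comp_hasDerivAt t h1
      exact this
    have h4 := h3.mul_const (NormedSpace.exp (G t))
    exact h4
  refine ⟨hmain, ?_⟩
  have hc : Commute (G t) (G' t) := by
    simpa [Commute, SemiconjBy] using hcomm t t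
  exact ((hc.exp_left).symm).eq
end

section
/- Let n be a finite type and let X be a real matrix in Matrix n n ℝ. Then the symmetric part condition 'X + Xᵀ is negative semidefinite' (i.e. −(X + Xᵀ) is positive semidefinite) holds if and only if ‖exp(t • X)‖ ≤ 1 for all t ≥ 0, where exp is the matrix exponential and ‖·‖ is the ℓ²→ℓ² operator norm. -/
open scoped Matrix.Norms.L2Operator Matrix

open Matrix NormedSpace

section aux

variable {n : Type*} [Fintype n] [DecidableEq n]

local notation "⟪" x ", " y "⟫" => inner (𝕜 := ℝ) x y

lemma key_coord (M : Matrix n n ℝ) (w : EuclideanSpace ℝ n) (x : n) :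
    (Matrix.toEuclideanCLM (𝕜 := ℝ) M) w x = (M *ᵥ (WithLp.equiv 2 (n → ℝ) w)) x := by
  have := congrFun (Matrix.ofLp_toEuclideanCLM M w) x
  simpa [Matrix.toLin'_apply] using this

/-- Evaluation of `toEuclideanCLM` at a fixed vector, as a continuous linear map. -/
noncomputable def evalCLM (v : EuclideanSpace ℝ n) :
    Matrix n n ℝ →L[ℝ] EuclideanSpace ℝ n :=
  LinearMap.toContinuousLinearMap
    { toFun := fun A => Matrix.toEuclideanCLM (𝕜 := ℝ) A v
      map_add' := by intro A B; simp
      map_smul' := by intro c A; simp }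

lemma evalCLM_apply (v : EuclideanSpace ℝ n) (A : Matrix n n ℝ) :
    evalCLM v A = Matrix.toEuclideanCLM (𝕜 := ℝ) A v := rfl

lemma aux_inner (M : Matrix n n ℝ) (w : EuclideanSpace ℝ n) :
    ⟪w, Matrix.toEuclideanCLM (𝕜 := ℝ) M w⟫ + ⟪Matrix.toEuclideanCLM (𝕜 := ℝ) M w, w⟫
      = (WithLp.equiv 2 (n → ℝ) w) ⬝ᵥ ((M + Mᵀ) *ᵥ (WithLp.equiv 2 (n → ℝ) w)) := by
  have h1 : ⟪w, Matrix.toEuclideanCLM (𝕜 := ℝ) M w⟫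
      = (WithLp.equiv 2 (n → ℝ) w) ⬝ᵥ (M *ᵥ (WithLp.equiv 2 (n → ℝ) w)) := by
    simp [PiLp.inner_apply, RCLike.inner_apply, dotProduct, key_coord]
    exact Finset.sum_congr rfl fun _ _ => mul_comm _ _
  have h2 : ⟪Matrix.toEuclideanCLM (𝕜 := ℝ) M w, w⟫
      = (M *ᵥ (WithLp.equiv 2 (n → ℝ) w)) ⬝ᵥ (WithLp.equiv 2 (n → ℝ) w) := by
    simp [PiLp.inner_apply, RCLike.inner_apply, dotProduct, key_coord]
    exact Finset.sum_congr rfl fun _ _ => mul_comm _ _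
  rw [h1, h2, Matrix.add_mulVec, dotProduct_add]
  congr 1
  rw [dotProduct_mulVec, Matrix.vecMul_transpose]

/-- The derivative of `s ↦ ‖exp(s X) v‖²`. -/
lemma aux_hasDerivAt (X : Matrix n n ℝ) (v : EuclideanSpace ℝ n) (s : ℝ) :
    HasDerivAt (fun s : ℝ => ⟪Matrix.toEuclideanCLM (𝕜 := ℝ) (exp (s • X)) v,
        Matrix.toEuclideanCLM (𝕜 := ℝ) (exp (s • X)) v⟫)
      ((WithLp.equiv 2 (n → ℝ) (Matrix.toEuclideanCLM (𝕜 := ℝ) (exp (s • X)) v)) ⬝ᵥ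
        ((X + Xᵀ) *ᵥ (WithLp.equiv 2 (n → ℝ) (Matrix.toEuclideanCLM (𝕜 := ℝ) (exp (s • X)) v)))) s := by
  have h1 : HasDerivAt (fun s : ℝ => exp (s • X)) (X * exp (s • X)) s :=
    hasDerivAt_exp_smul_const' X s
  have h2 : HasDerivAt (fun s : ℝ => Matrix.toEuclideanCLM (𝕜 := ℝ) (exp (s • X)) v)
      (Matrix.toEuclideanCLM (𝕜 := ℝ) X (Matrix.toEuclideanCLM (𝕜 := ℝ) (exp (s • X)) v)) s := by
    have := (evalCLM v).hasFDerivAt.comp_hasDerivAt s h1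
    simpa only [evalCLM_apply, Function.comp_def, _root_.map_mul,
      ContinuousLinearMap.mul_apply] using this
  have h3 := HasDerivAt.inner ℝ h2 h2
  rw [aux_inner] at h3
  exact h3

end aux

/-- `X + Xᵀ` is negative semidefinite iff `‖exp(t • X)‖ ≤ 1` for all `t ≥ 0`,
where `‖·‖` is the `ℓ² → ℓ²` operator norm. -/
theorem stmt_11 (n : Type*) [Fintype n] [DecidableEq n] (X : Matrix n n ℝ) :
    (-(X + Xᵀ)).PosSemidef ↔ ∀ t : ℝ, 0 ≤ t → ‖NormedSpace.exp (t • X)‖ ≤ 1 := by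
  constructor
  · intro h t ht
    rw [Matrix.cstar_norm_def]
    refine ContinuousLinearMap.opNorm_le_bound _ zero_le_one fun v => ?_
    set g : ℝ → ℝ := fun s => inner (𝕜 := ℝ)
      (Matrix.toEuclideanCLM (𝕜 := ℝ) (exp (s • X)) v)
      (Matrix.toEuclideanCLM (𝕜 := ℝ) (exp (s • X)) v) with hg
    have hanti : Antitone g := by
      refine antitone_of_deriv_nonpos (fun s => (aux_hasDerivAt X v s).differentiableAt) fun s => ?_
      rw [(aux_hasDerivAt X v s).deriv]
      have := h.dotProduct_mulVec_nonneg (WithLp.equiv 2 (n → ℝ) (Matrix.toEuclideanCLM (𝕜 := ℝ) (exp (s • X)) v))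
      simp only [Matrix.neg_mulVec, dotProduct_neg, star_trivial] at this
      linarith
    have hg0 : g 0 = ‖v‖ ^ 2 := by
      simp only [hg, zero_smul, NormedSpace.exp_zero, _root_.map_one, ContinuousLinearMap.one_apply]
      exact real_inner_self_eq_norm_sq v
    have hgt : g t = ‖Matrix.toEuclideanCLM (𝕜 := ℝ) (exp (t • X)) v‖ ^ 2 := by
      simp only [hg]
      exact real_inner_self_eq_norm_sq _
    have := hanti ht
    rw [hg0, hgt] at this
    rw [one_mul]
    nlinarith [norm_nonneg (Matrix.toEuclideanCLM (𝕜 := ℝ) (exp (t • X)) v), norm_nonneg v]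
  · intro h
    refine Matrix.PosSemidef.of_dotProduct_mulVec_nonneg ?_ ?_
    · show (-(X + Xᵀ))ᴴ = -(X + Xᵀ)
      ext i j
      simp [Matrix.conjTranspose_apply, add_comm]
    · intro x
      set v : EuclideanSpace ℝ n := (WithLp.equiv 2 (n → ℝ)).symm x with hv
      have hvx : WithLp.equiv 2 (n → ℝ) v = x := Equiv.apply_symm_apply _ x
      set g : ℝ → ℝ := fun s => inner (𝕜 := ℝ)
        (Matrix.toEuclideanCLM (𝕜 := ℝ) (exp (s • X)) v)
        (Matrix.toEuclideanCLM (𝕜 := ℝ) (exp (s • X)) v) with hg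
      have hg0 : g 0 = ‖v‖ ^ 2 := by
        simp only [hg, zero_smul, NormedSpace.exp_zero, _root_.map_one, ContinuousLinearMap.one_apply]
        exact real_inner_self_eq_norm_sq v
      have hle : ∀ s : ℝ, 0 ≤ s → g s ≤ g 0 := by
        intro s hs
        have h1 : ‖Matrix.toEuclideanCLM (𝕜 := ℝ) (exp (s • X)) v‖
            ≤ ‖exp (s • X)‖ * ‖v‖ := by
          rw [Matrix.cstar_norm_def]
          exact ContinuousLinearMap.le_opNorm _ v
        have h2 := h s hs
        have h3 : ‖Matrix.toEuclideanCLM (𝕜 := ℝ) (exp (s • X)) v‖ ≤ ‖v‖ := by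
          calc ‖Matrix.toEuclideanCLM (𝕜 := ℝ) (exp (s • X)) v‖
              ≤ ‖exp (s • X)‖ * ‖v‖ := h1
            _ ≤ 1 * ‖v‖ := by gcongr
            _ = ‖v‖ := one_mul _
        rw [hg0]
        have : g s = ‖Matrix.toEuclideanCLM (𝕜 := ℝ) (exp (s • X)) v‖ ^ 2 := by
          simp only [hg]
          exact real_inner_self_eq_norm_sq _
        rw [this]
        exact pow_le_pow_left₀ (norm_nonneg _) h3 2
      -- derivative of g at 0 is nonpositive
      have hd := aux_hasDerivAt X v 0
      have hu0 : Matrix.toEuclideanCLM (𝕜 := ℝ) (exp ((0:ℝ) • X)) v = v := by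
        simp [zero_smul, NormedSpace.exp_zero]
      rw [hu0, hvx] at hd
      have hd' : HasDerivWithinAt g (x ⬝ᵥ ((X + Xᵀ) *ᵥ x)) (Set.Ioi 0) 0 :=
        hd.hasDerivWithinAt
      rw [hasDerivWithinAt_iff_tendsto_slope' (by simp)] at hd'
      have hslope : ∀ᶠ s in nhdsWithin 0 (Set.Ioi 0), slope g 0 s ≤ 0 := by
        refine eventually_nhdsWithin_of_forall fun s hs => ?_
        rw [slope_def_field]
        have hs0 : (0:ℝ) < s := hs
        have := hle s hs0.le
        rw [div_nonpos_iff]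
        right
        constructor
        · linarith
        · linarith
      have hfin : x ⬝ᵥ ((X + Xᵀ) *ᵥ x) ≤ 0 :=
        le_of_tendsto hd' hslope
      simp only [Matrix.neg_mulVec, dotProduct_neg, star_trivial]
      linarith
end

section
/- Let λT, λz, λT', λz' be real numbers with λz > 0 and |λT| + λz ≤ 1. Define γ₊ = (λT'·λz − (1 + λT)·λz')/(2λz), γ₋ = (−λT'·λz − (1 − λT)·λz')/(2λz), ξ₊ = (λT' − λz')/(2λz), ξ₋ = (−λT' − λz')/(2λz). If ξ₊ ≥ 0 and ξ₋ ≥ 0, then γ₊ ≥ 0 and γ₋ ≥ 0. (For invertible phase covariant dynamics, Heisenberg CP-divisibility implies Schrödinger CP-divisibility.) -/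
/-- For invertible phase covariant dynamics (`λz > 0`, `|λT| + λz ≤ 1`), Heisenberg
CP-divisibility (`ξ± ≥ 0`) implies Schrödinger CP-divisibility (`γ± ≥ 0`). -/
theorem stmt_13 (lT lz lT' lz' : ℝ) (hlz : 0 < lz) (hCP : |lT| + lz ≤ 1)
    (hξp : 0 ≤ (lT' - lz') / (2 * lz)) (hξm : 0 ≤ (-lT' - lz') / (2 * lz)) :
    0 ≤ (lT' * lz - (1 + lT) * lz') / (2 * lz) ∧
      0 ≤ (-lT' * lz - (1 - lT) * lz') / (2 * lz) := by
  have h2 : (0:ℝ) < 2 * lz := by linarith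
  have hp : 0 ≤ lT' - lz' := by
    rcases div_nonneg_iff.mp hξp with ⟨h,_⟩|⟨_,h⟩ <;> linarith
  have hm : 0 ≤ -lT' - lz' := by
    rcases div_nonneg_iff.mp hξm with ⟨h,_⟩|⟨_,h⟩ <;> linarith
  have habs := abs_le.mp (by linarith : |lT| ≤ 1 - lz)
  have hz' : lz' ≤ 0 := by linarith
  constructor <;> apply div_nonneg _ (le_of_lt h2)
  · nlinarith [mul_nonneg hp hlz.le, mul_nonneg (by linarith : (0:ℝ) ≤ 1 + lT - lz) (neg_nonneg.mpr hz')]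
  · nlinarith [mul_nonneg hm hlz.le, mul_nonneg (by linarith : (0:ℝ) ≤ 1 - lT - lz) (neg_nonneg.mpr hz')]
end

section
/- Take the phase covariant dynamics with λT(t) = (sin t)/2 and λz(t) = e^{−t}, so that λT'(t) = (cos t)/2 and λz'(t) = −e^{−t}, and define at each t the left rates γ₊(t) = (λT'(t)·λz(t) − (1 + λT(t))·λz'(t))/(2λz(t)), γ₋(t) = (−λT'(t)·λz(t) − (1 − λT(t))·λz'(t))/(2λz(t)) and the right rate ξ₊(t) = (λT'(t) − λz'(t))/(2λz(t)). Then γ₊(t) ≥ 0 and γ₋(t) ≥ 0 for every t ≥ 0 (indeed γ±(t) = (1 ± (sin t + cos t)/2)/2), but there exists t ≥ 0 (e.g. t = π) with ξ₊(t) < 0. Hence this dynamics has nonnegative left rates at all times while its right rates fail to be nonnegative. -/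
/-- For the phase covariant dynamics with `λT(t) = (sin t)/2` and `λz(t) = e^{-t}`,
the left rates `γ±(t) = (1 ± (sin t + cos t)/2)/2` are nonnegative for all `t ≥ 0`,
but the right rate `ξ₊` becomes negative at some `t ≥ 0`. -/
theorem stmt_14 :
    let lT : ℝ → ℝ := fun t => Real.sin t / 2
    let lz : ℝ → ℝ := fun t => Real.exp (-t)
    let lT' : ℝ → ℝ := fun t => Real.cos t / 2
    let lz' : ℝ → ℝ := fun t => -Real.exp (-t)
    let γp : ℝ → ℝ := fun t => (lT' t * lz t - (1 + lT t) * lz' t) / (2 * lz t)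
    let γm : ℝ → ℝ := fun t => (-lT' t * lz t - (1 - lT t) * lz' t) / (2 * lz t)
    let ξp : ℝ → ℝ := fun t => (lT' t - lz' t) / (2 * lz t)
    (∀ t : ℝ, 0 ≤ t →
      γp t = (1 + (Real.sin t + Real.cos t) / 2) / 2 ∧
      γm t = (1 - (Real.sin t + Real.cos t) / 2) / 2 ∧
      0 ≤ γp t ∧ 0 ≤ γm t) ∧
    ∃ t : ℝ, 0 ≤ t ∧ ξp t < 0 := by
  intro lT lz lT' lz' γp γm ξp
  constructor
  · intro t ht
    have he : Real.exp (-t) ≠ 0 := (Real.exp_pos _).ne'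
    have hgp : γp t = (1 + (Real.sin t + Real.cos t) / 2) / 2 := by
      simp only [γp, lT, lz, lT', lz']
      field_simp
      ring
    have hgm : γm t = (1 - (Real.sin t + Real.cos t) / 2) / 2 := by
      simp only [γm, lT, lz, lT', lz']
      field_simp
      ring
    have hs := Real.neg_one_le_sin t
    have hc := Real.neg_one_le_cos t
    have hs' := Real.sin_le_one t
    have hc' := Real.cos_le_one t
    refine ⟨hgp, hgm, ?_, ?_⟩
    · rw [hgp]; nlinarith
    · rw [hgm]; nlinarith
  · refine ⟨Real.pi, Real.pi_pos.le, ?_⟩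
    simp only [ξp, lT', lz', Real.cos_pi]
    have he : (0:ℝ) < Real.exp (-Real.pi) := Real.exp_pos _
    have h2 : Real.exp (-Real.pi) < 1/2 := by
      rw [Real.exp_neg]
      rw [inv_lt_comm₀ (Real.exp_pos _) (by norm_num)]
      calc (1/2 : ℝ)⁻¹ = 2 := by norm_num
        _ < Real.exp 1 := by
            have := Real.add_one_le_exp 1
            nlinarith [Real.exp_pos 1, Real.exp_one_gt_d9]
        _ ≤ Real.exp Real.pi := Real.exp_le_exp.mpr (by nlinarith [Real.pi_gt_three])
    apply div_neg_of_neg_of_pos <;> nlinarith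
end

section
/- Let n and m be nonempty finite types and let A be a matrix in Matrix n n ℂ. Then the Kronecker product of A with the identity satisfies ‖A ⊗ₖ (1 : Matrix m m ℂ)‖ = ‖A‖, where ‖·‖ is the ℓ²→ℓ² operator norm. -/
open scoped Matrix.Norms.L2Operator Kronecker
open Matrix

lemma euclid_norm_sq_eq {ι : Type*} [Fintype ι] (y : EuclideanSpace ℂ ι) :
    ‖y‖ ^ 2 = ∑ i, ‖y i‖ ^ 2 := by
  rw [EuclideanSpace.norm_eq, Real.sq_sqrt (Finset.sum_nonneg fun i _ => sq_nonneg _)]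

lemma kron_apply {n m : Type*} [Fintype n] [DecidableEq n] [Fintype m] [DecidableEq m]
    (A : Matrix n n ℂ) (x : EuclideanSpace ℂ (n × m)) (i : n) (j : m) :
    (Matrix.toEuclideanLin (A ⊗ₖ (1 : Matrix m m ℂ)) x) (i, j)
      = (Matrix.toEuclideanLin A ((WithLp.equiv 2 (n → ℂ)).symm fun k => x (k, j))) i := by
  show ((A ⊗ₖ (1 : Matrix m m ℂ)) *ᵥ fun p => x p) (i, j) = (A *ᵥ fun k => x (k, j)) i
  simp [Matrix.mulVec, dotProduct, Matrix.kroneckerMap, Fintype.sum_prod_type,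
    Matrix.one_apply, mul_ite, Finset.sum_ite_eq' Finset.univ j]

lemma kron_norm_sq {n m : Type*} [Fintype n] [DecidableEq n] [Fintype m] [DecidableEq m]
    (A : Matrix n n ℂ) (x : EuclideanSpace ℂ (n × m)) :
    ‖Matrix.toEuclideanLin (A ⊗ₖ (1 : Matrix m m ℂ)) x‖ ^ 2
      = ∑ j : m, ‖Matrix.toEuclideanLin A
          ((WithLp.equiv 2 (n → ℂ)).symm fun k => x (k, j))‖ ^ 2 := by
  rw [euclid_norm_sq_eq, Fintype.sum_prod_type, Finset.sum_comm]
  refine Finset.sum_congr rfl fun j _ => ?_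
  rw [euclid_norm_sq_eq]
  refine Finset.sum_congr rfl fun i _ => ?_
  rw [kron_apply]

lemma euclid_col_norm_sq {n m : Type*} [Fintype n] [Fintype m]
    (x : EuclideanSpace ℂ (n × m)) :
    ‖x‖ ^ 2 = ∑ j : m, ‖(WithLp.equiv 2 (n → ℂ)).symm fun k => x (k, j)‖ ^ 2 := by
  rw [euclid_norm_sq_eq, Fintype.sum_prod_type, Finset.sum_comm]
  refine Finset.sum_congr rfl fun j _ => ?_
  rw [euclid_norm_sq_eq]
  rfl

/-- The `ℓ² → ℓ²` operator norm is invariant under tensoring with the identity: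
`‖A ⊗ₖ 1‖ = ‖A‖`. -/
theorem stmt_16 (n m : Type*) [Fintype n] [Nonempty n] [DecidableEq n]
    [Fintype m] [Nonempty m] [DecidableEq m] (A : Matrix n n ℂ) :
    ‖A ⊗ₖ (1 : Matrix m m ℂ)‖ = ‖A‖ := by
  classical
  refine le_antisymm ?_ ?_
  · rw [Matrix.l2_opNorm_def]
    refine ContinuousLinearMap.opNorm_le_bound _ (norm_nonneg A) fun x => ?_
    simp only [LinearEquiv.trans_apply, LinearMap.coe_toContinuousLinearMap']
    have hn : 0 ≤ ‖A‖ * ‖x‖ := mul_nonneg (norm_nonneg _) (norm_nonneg _)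
    rw [← Real.sqrt_sq (norm_nonneg _), ← Real.sqrt_sq hn]
    refine Real.sqrt_le_sqrt ?_
    rw [kron_norm_sq, mul_pow, euclid_col_norm_sq x, Finset.mul_sum]
    refine Finset.sum_le_sum fun j _ => ?_
    rw [← mul_pow]
    refine pow_le_pow_left₀ (norm_nonneg _) ?_ 2
    have := Matrix.l2_opNorm_mulVec A ((WithLp.equiv 2 (n → ℂ)).symm fun k => x (k, j))
    simpa [Matrix.toEuclideanLin_apply] using this
  · rw [Matrix.l2_opNorm_def A]
    refine ContinuousLinearMap.opNorm_le_bound _ (norm_nonneg _) fun x => ?_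
    simp only [LinearEquiv.trans_apply, LinearMap.coe_toContinuousLinearMap']
    obtain ⟨j0⟩ := ‹Nonempty m›
    set y : EuclideanSpace ℂ (n × m) :=
      (WithLp.equiv 2 (n × m → ℂ)).symm fun p => if p.2 = j0 then x p.1 else 0 with hy
    have hcol : ∀ j : m, ((WithLp.equiv 2 (n → ℂ)).symm fun k => y (k, j))
        = if j = j0 then x else 0 := by
      intro j
      by_cases hj : j = j0
      · rw [if_pos hj]; ext k
        show (if j = j0 then x k else 0) = x k
        rw [if_pos hj]
      · rw [if_neg hj]; ext k
        show (if j = j0 then x k else 0) = (0 : EuclideanSpace ℂ n) k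
        rw [if_neg hj]; rfl
    have hyn : ‖y‖ = ‖x‖ := by
      have h : ‖y‖ ^ 2 = ‖x‖ ^ 2 := by
        rw [euclid_col_norm_sq y, Finset.sum_eq_single j0]
        · rw [hcol j0, if_pos rfl]
        · intro j _ hj; rw [hcol j, if_neg hj]; simp
        · simp
      rw [← Real.sqrt_sq (norm_nonneg y), ← Real.sqrt_sq (norm_nonneg x), h]
    have happ : ‖Matrix.toEuclideanLin (A ⊗ₖ (1 : Matrix m m ℂ)) y‖
        = ‖Matrix.toEuclideanLin A x‖ := by
      have h : ‖Matrix.toEuclideanLin (A ⊗ₖ (1 : Matrix m m ℂ)) y‖ ^ 2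
          = ‖Matrix.toEuclideanLin A x‖ ^ 2 := by
        rw [kron_norm_sq, Finset.sum_eq_single j0]
        · rw [hcol j0, if_pos rfl]
        · intro j _ hj; rw [hcol j, if_neg hj]; simp
        · simp
      rw [← Real.sqrt_sq (norm_nonneg _), ← Real.sqrt_sq
        (norm_nonneg (Matrix.toEuclideanLin A x)), h]
    rw [← happ, ← hyn]
    exact Matrix.l2_opNorm_mulVec (A ⊗ₖ (1 : Matrix m m ℂ)) y
end

section
/- Define a(t) = (1 + e^{−t})/2 and b(t) = (1 + e^{−2t})/2, with derivatives a'(t) = −e^{−t}/2 and b'(t) = −e^{−2t}, and set at each t: w(t) = a'(t)·b(t) − a(t)·b'(t), ℓ₁(t) = (−w(t) − b'(t))/(a(t) + b(t) − 1), ℓ₂(t) = (w(t) − a'(t))/(a(t) + b(t) − 1), r₁(t) = −a'(t)/(a(t) + b(t) − 1), r₂(t) = −b'(t)/(a(t) + b(t) − 1). Then for every t ≥ 0 one has a(t) + b(t) − 1 > 0 and ℓ₁(t) ≥ 0, ℓ₂(t) ≥ 0, r₁(t) ≥ 0, r₂(t) ≥ 0; i.e. this classical two-state dynamics is both Schrödinger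 and Heisenberg divisible. -/
/-- For the classical 2-state dynamics with `a(t) = (1 + e^{-t})/2` and
`b(t) = (1 + e^{-2t})/2`, the left rates `ℓ₁, ℓ₂` and the right rates `r₁, r₂` are
all nonnegative for every `t ≥ 0`: the dynamics is both Schrödinger and Heisenberg
divisible. -/
theorem stmt_18 :
    let a : ℝ → ℝ := fun t => (1 + Real.exp (-t)) / 2
    let b : ℝ → ℝ := fun t => (1 + Real.exp (-2 * t)) / 2
    let a' : ℝ → ℝ := fun t => -Real.exp (-t) / 2
    let b' : ℝ → ℝ := fun t => -Real.exp (-2 * t)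
    let w : ℝ → ℝ := fun t => a' t * b t - a t * b' t
    let l₁ : ℝ → ℝ := fun t => (-w t - b' t) / (a t + b t - 1)
    let l₂ : ℝ → ℝ := fun t => (w t - a' t) / (a t + b t - 1)
    let r₁ : ℝ → ℝ := fun t => -a' t / (a t + b t - 1)
    let r₂ : ℝ → ℝ := fun t => -b' t / (a t + b t - 1)
    ∀ t : ℝ, 0 ≤ t →
      0 < a t + b t - 1 ∧ 0 ≤ l₁ t ∧ 0 ≤ l₂ t ∧ 0 ≤ r₁ t ∧ 0 ≤ r₂ t := by
  intro a b a' b' w l₁ l₂ r₁ r₂ t ht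
  simp only [a, b, a', b', w, l₁, l₂, r₁, r₂]
  have h1 : 0 < Real.exp (-t) := Real.exp_pos _
  have h2 : 0 < Real.exp (-2 * t) := Real.exp_pos _
  have h3 : Real.exp (-2 * t) ≤ 1 := Real.exp_le_one_iff.mpr (by linarith)
  have hd : 0 < (1 + Real.exp (-t)) / 2 + (1 + Real.exp (-2 * t)) / 2 - 1 := by nlinarith
  refine ⟨hd, ?_, ?_, ?_, ?_⟩ <;> apply div_nonneg _ hd.le <;> nlinarith [mul_pos h1 h2, mul_le_of_le_one_right h1.le h3]
end
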